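/- Let P, Q : Mod(R) → Mod(S) be right exact, coproduct-preserving additive functors between left module categories. If P(R) and Q(R) are isomorphic as (S,R)-bimodules (with the right R-action induced by functoriality applied to right-multiplication maps), then P and Q are naturally isomorphic functors. -/

import Mathlib

open CategoryTheory

def rmul (R : Type*) [Ring R] (r : R) : R →ₗ[R] R where
  toFun x := x * r
  map_add' := fun a b => add_mul a b r
  map_smul' := by intro s a; simp [smul_eq_mul, mul_assoc]

/-!
Write `M` as a quotient `π : R^(M) → M` of the free module on its elements. As `P` preserves
coproducts and epimorphisms, the maps `P m : P R → P M` for `m : R → M` are jointly epimorphic,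
so a natural transformation `P ⟶ Q` is determined by its component at `R`. Conversely, a map
`t : P R → Q R` extends to `τ : P ⟶ Q` with `P m ≫ τ_M = t ≫ Q m`: right exactness makes `P π`
the cokernel of `P (ker π) → P R^(M)`, and the map `P R^(M) → Q M` given by `t ≫ Q x` on the
summand of `x` vanishes on `P (ker π)` because every `R → R^(M)` is a finite sum of right
multiplications followed by summand inclusions, with which `t` commutes. The extensions of `e`
and `e⁻¹` are then mutually inverse.
-/

namespace EilenbergWatts

open Limits ModuleCat

universe u

variable {R : Type u} [Ring R]

section Generators

variable (M : ModuleCat.{u} R)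

noncomputable abbrev toSpanSingleton (x : M) : ModuleCat.of R R ⟶ M :=
  ofHom (LinearMap.toSpanSingleton R M x)

variable {M}

lemma hom_ext_ring {N : ModuleCat.{u} R} {f g : ModuleCat.of R R ⟶ N} (h : f.hom 1 = g.hom 1) :
    f = g :=
  ModuleCat.hom_ext (LinearMap.ext_ring h)

lemma eq_toSpanSingleton (m : ModuleCat.of R R ⟶ M) : m = toSpanSingleton M (m.hom 1) :=
  hom_ext_ring (by simp)

lemma toSpanSingleton_zero : toSpanSingleton M 0 = 0 :=
  hom_ext_ring (by simp)

lemma toSpanSingleton_add (x y : M) :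
    toSpanSingleton M (x + y) = toSpanSingleton M x + toSpanSingleton M y :=
  hom_ext_ring (by simp)

lemma rmul_comp_toSpanSingleton (r : R) (x : M) :
    ofHom (rmul R r) ≫ toSpanSingleton M x = toSpanSingleton M (r • x) :=
  hom_ext_ring (by simp [rmul])

@[simp]
lemma toSpanSingleton_comp {N : ModuleCat.{u} R} (x : M) (f : M ⟶ N) :
    toSpanSingleton M x ≫ f = toSpanSingleton N (f.hom x) :=
  hom_ext_ring (by simp)

variable (M)

noncomputable def freeCofan : Cofan fun _ : M => ModuleCat.of R R :=
  Cofan.mk ((free R).obj M) fun x => toSpanSingleton _ (freeMk x)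

noncomputable def isColimitFreeCofan : IsColimit (freeCofan M) :=
  Cofan.IsColimit.mk _ (fun s => freeDesc (↾fun x => (s.inj x).hom 1))
    (fun s x => by rw [eq_toSpanSingleton (s.inj x)]; simp [freeCofan])
    (fun s m hm => free_hom_ext fun x => by
      have h := congr_arg (fun f => f.hom (1 : R)) ((toSpanSingleton_comp _ _).symm.trans (hm x))
      simp only [hom_ofHom, LinearMap.toSpanSingleton_apply, one_smul] at h
      rw [freeDesc_apply]
      exact h)

noncomputable def freePresentation : (free R).obj M ⟶ M := freeDesc (𝟙 _)

lemma toSpanSingleton_freeMk_comp_freePresentation (x : M) :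
    toSpanSingleton _ (freeMk x) ≫ freePresentation M = toSpanSingleton M x := by
  simp [freePresentation]

instance : Epi (freePresentation M) :=
  (ModuleCat.epi_iff_surjective _).2 fun x => ⟨freeMk x, by simp [freePresentation]⟩

end Generators

section Functor

variable {D : Type*} [Category D]

lemma hom_ext_of_forall_map_comp (P : ModuleCat.{u} R ⥤ D) [P.PreservesEpimorphisms]
    {M : ModuleCat.{u} R} [PreservesColimitsOfShape (Discrete M) P] {T : D} {f g : P.obj M ⟶ T}
    (h : ∀ m : ModuleCat.of R R ⟶ M, P.map m ≫ f = P.map m ≫ g) : f = g := by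
  rw [← cancel_epi (P.map (freePresentation M))]
  refine Cofan.IsColimit.hom_ext
    (isColimitCofanMkObjOfIsColimit P _ _ (isColimitFreeCofan M)) _ _ fun x => ?_
  simpa only [cofan_mk_inj, ← P.map_comp_assoc, freeCofan,
    toSpanSingleton_freeMk_comp_freePresentation] using h _

lemma natTrans_ext_of_app_ring {P Q : ModuleCat.{u} R ⥤ D} [P.PreservesEpimorphisms]
    [∀ ι : Type u, PreservesColimitsOfShape (Discrete ι) P] {α β : P ⟶ Q}
    (h : α.app (ModuleCat.of R R) = β.app (ModuleCat.of R R)) : α = β := by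
  ext M
  refine hom_ext_of_forall_map_comp P fun m => ?_
  rw [α.naturality, β.naturality, h]

end Functor

section Extension

variable {D : Type*} [Category D] {P Q : ModuleCat.{u} R ⥤ D}

/-- For `D = ModuleCat S`, these are the `(S, R)`-bimodule maps `P R → Q R`. -/
def IsRMulEquivariant (t : P.obj (ModuleCat.of R R) ⟶ Q.obj (ModuleCat.of R R)) : Prop :=
  ∀ r : R, P.map (ofHom (rmul R r)) ≫ t = t ≫ Q.map (ofHom (rmul R r))

lemma IsRMulEquivariant.inv {e : P.obj (ModuleCat.of R R) ≅ Q.obj (ModuleCat.of R R)}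
    (he : IsRMulEquivariant e.hom) : IsRMulEquivariant e.inv := fun r => by
  rw [Iso.comp_inv_eq, Category.assoc, he r, Iso.inv_hom_id_assoc]

variable [∀ ι : Type u, PreservesColimitsOfShape (Discrete ι) P]
  (t : P.obj (ModuleCat.of R R) ⟶ Q.obj (ModuleCat.of R R))

noncomputable def descFree (M : ModuleCat.{u} R) : P.obj ((free R).obj M) ⟶ Q.obj M :=
  Cofan.IsColimit.desc (isColimitCofanMkObjOfIsColimit P _ _ (isColimitFreeCofan M))
    fun x => t ≫ Q.map (toSpanSingleton M x)

lemma map_toSpanSingleton_freeMk_comp_descFree (M : ModuleCat.{u} R) (x : M) :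
    P.map (toSpanSingleton _ (freeMk x)) ≫ descFree t M = t ≫ Q.map (toSpanSingleton M x) :=
  Cofan.IsColimit.fac (isColimitCofanMkObjOfIsColimit P _ _ (isColimitFreeCofan M)) _ x

variable {t} [Preadditive D] [P.Additive] [Q.Additive]

lemma IsRMulEquivariant.map_comp_descFree (ht : IsRMulEquivariant t) {M : ModuleCat.{u} R}
    (g : ModuleCat.of R R ⟶ (free R).obj M) :
    P.map g ≫ descFree t M = t ≫ Q.map (g ≫ freePresentation M) := by
  rw [eq_toSpanSingleton g]
  induction g.hom 1 using Finsupp.induction_linear with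
  | zero => erw [toSpanSingleton_zero]; simp
  | add v w hv hw =>
    erw [toSpanSingleton_add]
    simp only [Preadditive.add_comp, Preadditive.comp_add, Functor.map_add, hv, hw]
  | single x r =>
    have hsingle : toSpanSingleton ((free R).obj M) (Finsupp.single x r) =
        ofHom (rmul R r) ≫ toSpanSingleton _ (freeMk x) := by
      rw [rmul_comp_toSpanSingleton]
      exact congrArg _ (Finsupp.smul_single_one x r).symm
    rw [hsingle, P.map_comp_assoc, map_toSpanSingleton_freeMk_comp_descFree, reassoc_of% (ht r),
      ← Q.map_comp, Category.assoc, toSpanSingleton_freeMk_comp_freePresentation]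

variable [PreservesFiniteColimits P]

lemma IsRMulEquivariant.exists_map_comp_eq (ht : IsRMulEquivariant t) (M : ModuleCat.{u} R) :
    ∃ τ : P.obj M ⟶ Q.obj M, ∀ m : ModuleCat.of R R ⟶ M, P.map m ≫ τ = t ≫ Q.map m := by
  let π := freePresentation M
  have hπ : IsColimit (CokernelCofork.ofπ π (kernel.condition π)) :=
    Abelian.epiIsCokernelOfKernel (KernelFork.ofι _ (kernel.condition π)) (kernelIsKernel π)
  have hkernel : P.map (kernel.ι π) ≫ descFree t M = 0 :=
    hom_ext_of_forall_map_comp P fun m => by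
      rw [← P.map_comp_assoc, ht.map_comp_descFree, Category.assoc, kernel.condition]
      simp
  obtain ⟨τ, hτ⟩ := CokernelCofork.IsColimit.desc' (isColimitCoforkMapOfIsColimit' P _ hπ) _ hkernel
  refine ⟨τ, fun m => ?_⟩
  rw [eq_toSpanSingleton m]
  nth_rw 1 [← toSpanSingleton_freeMk_comp_freePresentation]
  rw [P.map_comp_assoc, show P.map π ≫ τ = descFree t M from hτ,
    map_toSpanSingleton_freeMk_comp_descFree]

noncomputable def IsRMulEquivariant.natTrans (ht : IsRMulEquivariant t) : P ⟶ Q where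
  app M := (ht.exists_map_comp_eq M).choose
  naturality M N f := hom_ext_of_forall_map_comp P fun m => by
    rw [← P.map_comp_assoc, (ht.exists_map_comp_eq N).choose_spec,
      reassoc_of% (ht.exists_map_comp_eq M).choose_spec, Q.map_comp]

lemma IsRMulEquivariant.map_comp_natTrans_app (ht : IsRMulEquivariant t) {M : ModuleCat.{u} R}
    (m : ModuleCat.of R R ⟶ M) : P.map m ≫ ht.natTrans.app M = t ≫ Q.map m :=
  (ht.exists_map_comp_eq M).choose_spec m

lemma IsRMulEquivariant.natTrans_app_ring (ht : IsRMulEquivariant t) :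
    ht.natTrans.app (ModuleCat.of R R) = t := by
  simpa using ht.map_comp_natTrans_app (𝟙 _)

end Extension

variable {D : Type*} [Category D] [Preadditive D] {P Q : ModuleCat.{u} R ⥤ D}
  [P.Additive] [Q.Additive] [PreservesFiniteColimits P] [PreservesFiniteColimits Q]
  [∀ ι : Type u, PreservesColimitsOfShape (Discrete ι) P]
  [∀ ι : Type u, PreservesColimitsOfShape (Discrete ι) Q]

noncomputable def IsRMulEquivariant.iso {e : P.obj (ModuleCat.of R R) ≅ Q.obj (ModuleCat.of R R)}
    (he : IsRMulEquivariant e.hom) : P ≅ Q where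
  hom := he.natTrans
  inv := he.inv.natTrans
  hom_inv_id := natTrans_ext_of_app_ring <| by simp [IsRMulEquivariant.natTrans_app_ring]
  inv_hom_id := natTrans_ext_of_app_ring <| by simp [IsRMulEquivariant.natTrans_app_ring]

end EilenbergWatts

theorem eilenberg_watts_comparison {R S : Type u} [Ring R] [Ring S]
    (P Q : ModuleCat.{u} R ⥤ ModuleCat.{u} S) [P.Additive] [Q.Additive]
    [Limits.PreservesFiniteColimits P] [Limits.PreservesFiniteColimits Q]
    [∀ ι : Type u, Limits.PreservesColimitsOfShape (Discrete ι) P]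
    [∀ ι : Type u, Limits.PreservesColimitsOfShape (Discrete ι) Q]
    (e : P.obj (ModuleCat.of R R) ≅ Q.obj (ModuleCat.of R R))
    (he : ∀ r : R,
      P.map (ModuleCat.ofHom (rmul R r)) ≫ e.hom = e.hom ≫ Q.map (ModuleCat.ofHom (rmul R r))) :
    Nonempty (P ≅ Q) :=
  ⟨EilenbergWatts.IsRMulEquivariant.iso (e := e) he⟩
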